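/- Let q = 2^m with m ≥ 3, and let β range over F_q \ F_2. For u = diag(β,1,β^{-1}) ∈ SU_3(F_q), the trace of the image of u under the 8-dimensional adjoint representation (on traceless matrices, modulo center) equals (β + β^{-1})^2, and these traces take at least (q-2)/2 > (q-1)/3 distinct nonzero values in F_q. -/

import Mathlib

/-!
Conjugation `x ↦ u x u⁻¹` on all `n × n` matrices has trace `tr u · tr u⁻¹`. When `n ≠ 0` in
`K` (here `3 = 1` in characteristic 2) the scalar matrices are a complement of the traceless
ones on which conjugation is the identity, so the trace on traceless matrices is
`tr u · tr u⁻¹ - 1`; for `u = diag(β, 1, β⁻¹)` this is `(1 + β + β⁻¹)² - 1 = (β + β⁻¹)²`.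

For the count, `β ∈ F_q \ F_2` runs over the `q - 2` nontrivial `(q - 1)`-th roots of unity of
the cyclic group `Kˣ` (`q - 1 ∣ q² - 1`), and `(β + β⁻¹)²` determines `β` up to `β ↦ β⁻¹`
because squaring is injective in characteristic 2.
-/

/-- The adjoint (conjugation) action `x ↦ u x u⁻¹` on `3 × 3` matrices, as a linear
map. -/
noncomputable def adjAction {K : Type*} [Field K] (u : Matrix (Fin 3) (Fin 3) K) :
    Matrix (Fin 3) (Fin 3) K →ₗ[K] Matrix (Fin 3) (Fin 3) K :=
  (LinearMap.mulLeft K u).comp (LinearMap.mulRight K u⁻¹)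

open Finset Polynomial

namespace Module.Dual

variable {K V : Type*} [Field K] [AddCommGroup V] [Module K V]

theorem isCompl_ker_span_singleton {φ : Module.Dual K V} {x : V} (hx : φ x ≠ 0) :
    IsCompl (LinearMap.ker φ) (K ∙ x) := by
  constructor
  · rw [disjoint_iff_inf_le]
    rintro v ⟨hvφ, hvx⟩
    obtain ⟨a, rfl⟩ := Submodule.mem_span_singleton.mp hvx
    simp_all
  · rw [codisjoint_iff, eq_top_iff]
    rintro v -
    refine Submodule.mem_sup.mpr ⟨v - (φ v / φ x) • x, ?_, (φ v / φ x) • x,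
      Submodule.smul_mem _ _ (Submodule.mem_span_singleton_self x), sub_add_cancel _ _⟩
    simp [hx]

end Module.Dual

namespace LinearMap

variable {K V : Type*} [Field K] [AddCommGroup V] [Module K V] [FiniteDimensional K V]

theorem trace_eq_trace_restrict_add_trace_restrict {W L : Submodule K V} (h : IsCompl W L)
    {f : V →ₗ[K] V} (hW : Set.MapsTo f W W) (hL : Set.MapsTo f L L) :
    trace K V f = trace K W (f.restrict hW) + trace K L (f.restrict hL) := by
  have hWL : DirectSum.IsInternal ![W, L] :=
    (DirectSum.isInternal_submodule_iff_isCompl _ (i := 0) (j := 1) (by decide)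
      (by ext i; fin_cases i <;> simp)).mpr h
  rw [trace_eq_sum_trace_restrict hWL (f := f) (Fin.forall_fin_two.mpr ⟨hW, hL⟩),
    Fin.sum_univ_two]
  rfl

theorem trace_eq_trace_restrict_ker_add_one {φ : Module.Dual K V} {x : V} (hφx : φ x ≠ 0)
    {f : V →ₗ[K] V} (hfx : f x = x) (hW : ∀ v ∈ ker φ, f v ∈ ker φ) :
    trace K V f = trace K _ (f.restrict hW) + 1 := by
  have hx : x ≠ 0 := by rintro rfl; simp at hφx
  have hL : Set.MapsTo f (K ∙ x) (K ∙ x) := by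
    rintro _ hv
    obtain ⟨a, rfl⟩ := Submodule.mem_span_singleton.mp hv
    simpa [hfx] using hv
  have hid : f.restrict hL = LinearMap.id := by
    ext ⟨v, hv⟩
    obtain ⟨a, rfl⟩ := Submodule.mem_span_singleton.mp hv
    change f (a • x) = a • x
    rw [map_smul, hfx]
  rw [trace_eq_trace_restrict_add_trace_restrict
      (Module.Dual.isCompl_ker_span_singleton hφx) hW hL, hid, trace_id,
    finrank_span_singleton hx, Nat.cast_one]

end LinearMap

namespace Matrix

@[simp]
theorem stdBasis_repr_apply {R m n : Type*} [Fintype m] [Finite n] [Semiring R]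
    (x : Matrix m n R) (p : m × n) : (stdBasis R m n).repr x p = x p.1 p.2 := by
  simp [stdBasis, Module.Basis.repr_reindex]

theorem mul_single_one_mul_apply_same {n R : Type*} [Fintype n] [DecidableEq n] [Semiring R]
    (a b : Matrix n n R) (i j : n) :
    (a * (single i j 1 * b) : Matrix n n R) i j = a i i * b j j := by
  rw [mul_apply, sum_eq_single i (fun k _ hk => by simp [hk]) (by simp)]
  simp

variable {n K : Type*} [Fintype n] [DecidableEq n] [Field K]

theorem trace_mulLeft_comp_mulRight (a b : Matrix n n K) :
    LinearMap.trace K _ ((LinearMap.mulLeft K a).comp (LinearMap.mulRight K b)) =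
      a.trace * b.trace := by
  rw [LinearMap.trace_eq_matrix_trace K (stdBasis K n n), trace, trace, trace,
    Fintype.sum_prod_type, sum_mul_sum]
  refine sum_congr rfl fun i _ => sum_congr rfl fun j _ => ?_
  simp [LinearMap.toMatrix_apply, stdBasis_eq_single, mul_single_one_mul_apply_same]

theorem trace_restrict_conj_ker_trace (hn : (Fintype.card n : K) ≠ 0) {u : Matrix n n K}
    (hu : IsUnit u.det)
    (hW : ∀ x ∈ LinearMap.ker (traceLinearMap n K K),
      (LinearMap.mulLeft K u ∘ₗ LinearMap.mulRight K u⁻¹) x ∈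
        LinearMap.ker (traceLinearMap n K K)) :
    LinearMap.trace K _ ((LinearMap.mulLeft K u ∘ₗ LinearMap.mulRight K u⁻¹).restrict hW) =
      u.trace * u⁻¹.trace - 1 := by
  have hfix : (LinearMap.mulLeft K u ∘ₗ LinearMap.mulRight K u⁻¹) 1 = 1 := by
    simp [mul_nonsing_inv _ hu]
  have := LinearMap.trace_eq_trace_restrict_ker_add_one (φ := traceLinearMap n K K)
    (by simpa using hn) hfix hW
  rw [trace_mulLeft_comp_mulRight] at this
  exact eq_sub_of_add_eq this.symm

end Matrix

theorem trace_adjAction_diagonal {K : Type*} [Field K] [CharP K 2] {β : K} (hβ : β ≠ 0)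
    (hW : ∀ x ∈ LinearMap.ker (Matrix.traceLinearMap (Fin 3) K K),
      adjAction (Matrix.diagonal ![β, 1, β⁻¹]) x ∈
        LinearMap.ker (Matrix.traceLinearMap (Fin 3) K K)) :
    LinearMap.trace K _ ((adjAction (Matrix.diagonal ![β, 1, β⁻¹])).restrict hW) =
      (β + β⁻¹) ^ 2 := by
  have hinv : (Matrix.diagonal ![β, 1, β⁻¹])⁻¹ = Matrix.diagonal ![β⁻¹, 1, β] := by
    refine Matrix.inv_eq_right_inv ?_
    rw [Matrix.diagonal_mul_diagonal, ← Matrix.diagonal_one]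
    congr 1
    ext i
    fin_cases i <;> simp [hβ]
  have h3 : (Fintype.card (Fin 3) : K) ≠ 0 := by
    rw [Fintype.card_fin, CharTwo.natCast_eq_mod]
    norm_num
  refine (Matrix.trace_restrict_conj_ker_trace h3 (by simp [Fin.prod_univ_three, hβ]) hW).trans ?_
  simp only [hinv, Matrix.trace_diagonal, Fin.sum_univ_three, Matrix.cons_val_zero,
    Matrix.cons_val_one, Matrix.cons_val]
  linear_combination (β + β⁻¹) * CharTwo.two_eq_zero (R := K)

theorem eq_or_eq_inv_of_add_inv_eq {K : Type*} [Field K] {β γ : K} (hβ : β ≠ 0) (hγ : γ ≠ 0)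
    (h : γ + γ⁻¹ = β + β⁻¹) : γ = β ∨ γ = β⁻¹ := by
  have : (γ - β) * (γ * β - 1) = 0 := by
    linear_combination (γ * β) * h - β * mul_inv_cancel₀ hγ + γ * mul_inv_cancel₀ hβ
  rcases mul_eq_zero.mp this with h' | h'
  · exact Or.inl (sub_eq_zero.mp h')
  · exact Or.inr (eq_inv_of_mul_eq_one_left (sub_eq_zero.mp h'))

theorem add_inv_sq_ne_zero {K : Type*} [Field K] [CharP K 2] {β : K} (hβ0 : β ≠ 0)
    (hβ1 : β ≠ 1) : (β + β⁻¹) ^ 2 ≠ 0 := by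
  rw [pow_ne_zero_iff two_ne_zero]
  intro h
  have : (β + 1) ^ 2 = 0 := by
    linear_combination β * h - mul_inv_cancel₀ hβ0 + β * CharTwo.two_eq_zero (R := K)
  exact hβ1 (CharTwo.add_eq_zero.mp (pow_eq_zero_iff two_ne_zero |>.mp this))

theorem card_le_two_mul_card_image_add_inv_sq {K : Type*} [Field K] [CharP K 2]
    [DecidableEq K] {B : Finset K} (hB : 0 ∉ B) :
    #B ≤ 2 * #(B.image fun β => (β + β⁻¹) ^ 2) := by
  refine card_le_mul_card_image B 2 fun t ht => ?_
  obtain ⟨β, hβB, rfl⟩ := mem_image.mp ht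
  have hfiber : {γ ∈ B | (γ + γ⁻¹) ^ 2 = (β + β⁻¹) ^ 2} ⊆ {β, β⁻¹} := by
    intro γ hγ
    obtain ⟨hγB, hγ⟩ := mem_filter.mp hγ
    rw [CharTwo.sq_inj] at hγ
    simpa using eq_or_eq_inv_of_add_inv_eq (ne_of_mem_of_not_mem hβB hB)
      (ne_of_mem_of_not_mem hγB hB) hγ
  exact (card_le_card hfiber).trans card_le_two

theorem FiniteField.card_nthRootsFinset_one {K : Type*} [Field K] [Fintype K] [DecidableEq K]
    {d : ℕ} (hd : d ∣ Fintype.card K - 1) : #(nthRootsFinset d (1 : K)) = d := by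
  obtain ⟨g, hg⟩ := IsCyclic.exists_ofOrder_eq_natCard (α := Kˣ)
  have hζ : IsPrimitiveRoot (g : K) (Fintype.card K - 1) := by
    rw [IsPrimitiveRoot.coe_units_iff, ← Fintype.card_units, ← Nat.card_eq_fintype_card, ← hg]
    exact IsPrimitiveRoot.orderOf g
  obtain ⟨e, he⟩ := hd
  exact (hζ.pow (by simpa using Fintype.one_lt_card) (he.trans (mul_comm d e))).card_nthRootsFinset

theorem le_card_add_inv_sq_of_sub_one_dvd {K : Type*} [Field K] [Fintype K] [CharP K 2] {q : ℕ}
    (hq : q - 1 ∣ Fintype.card K - 1) :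
    (q - 2) / 2 ≤
      Nat.card {t : K | ∃ β : K, β ^ q = β ∧ β ≠ 0 ∧ β ≠ 1 ∧ t = (β + β⁻¹) ^ 2} := by
  classical
  set B := (nthRootsFinset (q - 1) (1 : K)).erase 1
  have hBq : ∀ β ∈ B, β ^ q = β ∧ β ≠ 0 ∧ β ≠ 1 := by
    intro β hβ
    obtain ⟨hβ1, hβroot⟩ := mem_erase.mp hβ
    have hq1 : 0 < q - 1 := Nat.pos_of_ne_zero fun h => by simp [h] at hβroot
    refine ⟨?_, ne_zero_of_mem_nthRootsFinset one_ne_zero hβroot, hβ1⟩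
    rw [← Nat.sub_add_cancel (Nat.one_le_of_lt (Nat.sub_pos_iff_lt.mp hq1)), pow_succ,
      (mem_nthRootsFinset hq1 1).mp hβroot, one_mul]
  have hB : q - 2 ≤ #B := by
    have := pred_card_le_card_erase (s := nthRootsFinset (q - 1) (1 : K)) (a := 1)
    rw [FiniteField.card_nthRootsFinset_one hq] at this
    omega
  have hBS : ((B.image fun β => (β + β⁻¹) ^ 2 : Finset K) : Set K) ⊆
      {t : K | ∃ β : K, β ^ q = β ∧ β ≠ 0 ∧ β ≠ 1 ∧ t = (β + β⁻¹) ^ 2} := by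
    intro t ht
    obtain ⟨β, hβ, rfl⟩ := mem_image.mp (mem_coe.mp ht)
    exact ⟨β, (hBq β hβ).1, (hBq β hβ).2.1, (hBq β hβ).2.2, rfl⟩
  have h2 := card_le_two_mul_card_image_add_inv_sq (B := B) fun h0 => (hBq 0 h0).2.1 rfl
  have hS := Nat.card_mono (Set.toFinite _) hBS
  rw [Nat.card_coe_set_eq, Set.ncard_coe_finset] at hS
  omega

/-- Let `q = 2^m` with `m ≥ 3`, and let `β` range over `F_q \ F_2` inside the field
`K` with `q²` elements.  For `u = diag(β,1,β⁻¹) ∈ SU₃(F_q)`, the trace of the image of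
`u` under the 8-dimensional adjoint representation (conjugation on traceless matrices)
equals `(β + β⁻¹)²`, and these traces take at least `(q-2)/2 > (q-1)/3` distinct
nonzero values in `F_q`. -/
theorem adjoint_traces_of_diagonal (m : ℕ) (hm : 3 ≤ m) (K : Type*) [Field K]
    [Fintype K] (hK : Fintype.card K = 2 ^ (2 * m)) :
    (∀ β : K, β ^ 2 ^ m = β → β ≠ 0 → β ≠ 1 →
      ∀ hW : ∀ x ∈ LinearMap.ker (Matrix.traceLinearMap (Fin 3) K K),
          adjAction (Matrix.diagonal ![β, 1, β⁻¹]) x ∈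
            LinearMap.ker (Matrix.traceLinearMap (Fin 3) K K),
        LinearMap.trace K _ ((adjAction (Matrix.diagonal ![β, 1, β⁻¹])).restrict hW) =
          (β + β⁻¹) ^ 2) ∧
    (2 ^ m - 2) / 2 ≤
      Nat.card {t : K | ∃ β : K, β ^ 2 ^ m = β ∧ β ≠ 0 ∧ β ≠ 1 ∧ t = (β + β⁻¹) ^ 2} ∧
    2 ^ m - 1 < 3 * ((2 ^ m - 2) / 2) ∧
    ∀ t ∈ {t : K | ∃ β : K, β ^ 2 ^ m = β ∧ β ≠ 0 ∧ β ≠ 1 ∧ t = (β + β⁻¹) ^ 2},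
      t ≠ 0 := by
  have : Fact (Nat.Prime 2) := ⟨Nat.prime_two⟩
  have : CharP K 2 := charP_of_card_eq_prime_pow hK
  have hq : 2 ^ m - 1 ∣ Fintype.card K - 1 := by
    rw [hK]
    exact Nat.pow_sub_one_dvd_pow_sub_one 2 (dvd_mul_left m 2)
  have h8 : 2 ^ 3 ≤ 2 ^ m := Nat.pow_le_pow_right two_pos hm
  have heven : 2 ∣ 2 ^ m := dvd_pow_self 2 (by omega)
  refine ⟨fun β _ hβ0 _ hW => trace_adjAction_diagonal hβ0 hW,
    le_card_add_inv_sq_of_sub_one_dvd hq, by omega, ?_⟩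
  rintro t ⟨β, -, hβ0, hβ1, rfl⟩
  exact add_inv_sq_ne_zero hβ0 hβ1
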